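/- arXiv:2312.17054 — 3 statements merged into one kernel-verified Lean document; each statement's English description precedes it below -/
import Mathlib

section
/- Let $d \ge 3$ be odd, $V = (\mathbb{C}^2)^{\otimes d}$, and let $\omega = \omega_{d,2} \in \bigwedge^2 V$ be the Cayley form. Then for every $n \in [0, 2^d - 2]$, the Lefschetz map $L: \bigwedge^n V \to \bigwedge^{n+2} V$, $v \mapsto \omega \wedge v$, has full rank (i.e., is injective if $n \le 2^{d-1} - 1$ and surjective if $n \ge 2^{d-1} - 1$). -/
open ExteriorAlgebra

noncomputable section

/-- The tensor space `(ℂ^k)^{⊗ d}` realized as functions on the cube `[k]^d`. -/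
abbrev Tens (d k : ℕ) : Type := (Fin d → Fin k) → ℂ

/-- The standard basis vector `e_𝐢` of the tensor space. -/
def eb {d k : ℕ} (i : Fin d → Fin k) : Tens d k := Pi.single i 1

/-- The action of a `d`-tuple of `k × k` matrices on the tensor space. -/
def matAct {d k : ℕ} (g : Fin d → Matrix (Fin k) (Fin k) ℂ) : Tens d k →ₗ[ℂ] Tens d k where
  toFun f := fun x => ∑ y : Fin d → Fin k, (∏ j, g j (x j) (y j)) * f y
  map_add' f₁ f₂ := by
    funext x
    simp [mul_add, Finset.sum_add_distrib]
  map_smul' c f := by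
    funext x
    simp [Finset.mul_sum, mul_left_comm]

/-- The induced action on the exterior algebra `⋀ (ℂ^k)^{⊗ d}`. -/
def extAct {d k : ℕ} (g : Fin d → Matrix (Fin k) (Fin k) ℂ) :
    ExteriorAlgebra ℂ (Tens d k) →ₐ[ℂ] ExteriorAlgebra ℂ (Tens d k) :=
  ExteriorAlgebra.map (matAct g)

/-- `v` is a weight vector of weight `lam` (a `d`-tuple of integer vectors, recorded as
natural numbers) for the action of `GL(k)^{× d}`. -/
def IsWeightVector {d k : ℕ} (lam : Fin d → Fin k → ℕ)
    (v : ExteriorAlgebra ℂ (Tens d k)) : Prop :=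
  ∀ a : Fin d → Fin k → ℂ,
    extAct (fun j => Matrix.diagonal (a j)) v = (∏ j, ∏ i, a j i ^ lam j i) • v

/-- A matrix is upper unitriangular (unipotent). -/
def IsUnipotent {k : ℕ} (g : Matrix (Fin k) (Fin k) ℂ) : Prop :=
  (∀ i, g i i = 1) ∧ ∀ i j : Fin k, j < i → g i j = 0

/-- `v` is a highest weight vector of weight `lam`: a nonzero weight vector invariant under
`U(k)^{× d}`. -/
def IsHWV {d k : ℕ} (lam : Fin d → Fin k → ℕ) (v : ExteriorAlgebra ℂ (Tens d k)) : Prop :=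
  v ≠ 0 ∧ IsWeightVector lam v ∧
    ∀ g : Fin d → Matrix (Fin k) (Fin k) ℂ, (∀ j, IsUnipotent (g j)) → extAct g v = v

/-- The highest weight space of weight `lam` in `⋀^n (ℂ^k)^{⊗ d}`: the weight-`lam`,
unipotent-invariant vectors of degree `n` (a submodule; highest weight vectors are its
nonzero elements). -/
def HWVspace (d k : ℕ) (lam : Fin d → Fin k → ℕ) (n : ℕ) :
    Submodule ℂ (ExteriorAlgebra ℂ (Tens d k)) where
  carrier := {v | v ∈ ⋀[ℂ]^n (Tens d k) ∧ IsWeightVector lam v ∧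
    ∀ g : Fin d → Matrix (Fin k) (Fin k) ℂ, (∀ j, IsUnipotent (g j)) → extAct g v = v}
  add_mem' := by
    rintro u v ⟨hu1, hu2, hu3⟩ ⟨hv1, hv2, hv3⟩
    refine ⟨Submodule.add_mem _ hu1 hv1, fun a => ?_, fun g hg => ?_⟩
    · simp [map_add, hu2 a, hv2 a, smul_add]
    · simp [map_add, hu3 g hg, hv3 g hg]
  zero_mem' := ⟨Submodule.zero_mem _, fun a => by simp [IsWeightVector], fun g hg => by simp⟩
  smul_mem' := by
    rintro c v ⟨hv1, hv2, hv3⟩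
    refine ⟨Submodule.smul_mem _ _ hv1, fun a => ?_, fun g hg => ?_⟩
    · rw [map_smul, hv2 a, smul_comm]
    · rw [map_smul, hv3 g hg]

/-- The generalized Kronecker coefficient `g(𝛌)` of a `d`-tuple of partitions of `m` with at
most `k` columns, given here in terms of the tuple `mu` of *conjugate* partitions
(`mu j = (λ^{(j)})'`, a weakly decreasing `k`-tuple): it is the dimension of the corresponding
highest weight space in `⋀^m (ℂ^k)^{⊗ d}`. -/
def kron (d k : ℕ) (mu : Fin d → Fin k → ℕ) (m : ℕ) : ℕ :=
  Module.finrank ℂ (HWVspace d k mu m)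

/-- The Cayley form `ω_{d,k} ∈ ⋀^k (ℂ^k)^{⊗ d}`. -/
def cayley (d k : ℕ) : ExteriorAlgebra ℂ (Tens d k) :=
  ∑ π : Fin d → Equiv.Perm (Fin k),
    ((∏ j, Equiv.Perm.sign (π j) : ℤˣ) : ℤ) •
      ExteriorAlgebra.ιMulti ℂ k (fun i => eb (fun j => π j i))

/-! For odd `d` the flip `x ↦ x + 1` of the cube `{0,1}^d` reverses the sign of
`∏ⱼ sign (x j + ·)`, so `ω_{d,2} = ∑ₓ ±(e_x ∧ e_{x+1})` is a symplectic form in Darboux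
coordinates on the `2c`-dimensional space `V`, `c = 2^{d-1}`. Wedging with `ω` (`E`) and
contracting with the dual bivector (`F`) form an `sl₂`-pair: `F E - E F = c - n` on `⋀ⁿ V`.
Along the `F`-string of a vector `v ∈ ⋀ⁿ V` with `E v = 0` one gets
`E (F^{k+1} v) = -(k+1)(c-n+k) F^k v`; for `n < c` these coefficients never vanish, so `v = 0`.
Going down from the top degree, every eigenvalue of `F E` on `⋀^p V` (`c ≤ p + 2`) is a natural
number; hence `E F = F E - (c - n - 2)` is invertible on `⋀^{n+2} V` when `c ≤ n + 1`, and `E`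
is onto. -/

structure IsLefschetzPair {K M : Type*} [Field K] [AddCommGroup M] [Module K M]
    (E F : Module.End K M) (grade : ℕ → Submodule K M) (c : ℕ) : Prop where
  raise_mem {n : ℕ} {v : M} : v ∈ grade n → E v ∈ grade (n + 2)
  lower_mem {n : ℕ} {v : M} : v ∈ grade n → F v ∈ grade (n - 2)
  lower_eq_zero {n : ℕ} {v : M} : n < 2 → v ∈ grade n → F v = 0
  lower_raise {n : ℕ} {v : M} : v ∈ grade n → F (E v) = ((c : K) - n) • v + E (F v)
  grade_eq_bot {n : ℕ} : 2 * c < n → grade n = ⊥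

namespace IsLefschetzPair

variable {K M : Type*} [Field K] [AddCommGroup M] [Module K M]
  {E F : Module.End K M} {grade : ℕ → Submodule K M} {c n : ℕ} {v : M}

lemma pow_lower_mem (h : IsLefschetzPair E F grade c) (hv : v ∈ grade n) (k : ℕ) :
    (F ^ k) v ∈ grade (n - 2 * k) := by
  induction k with
  | zero => simpa using hv
  | succ k ih =>
    rw [pow_succ', Module.End.mul_apply, show n - 2 * (k + 1) = n - 2 * k - 2 by omega]
    exact h.lower_mem ih

lemma pow_lower_eq_zero (h : IsLefschetzPair E F grade c) (hv : v ∈ grade n) :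
    (F ^ (n / 2 + 1)) v = 0 := by
  rw [pow_succ', Module.End.mul_apply]
  exact h.lower_eq_zero (by omega) (h.pow_lower_mem hv _)

lemma raise_pow_lower_succ (h : IsLefschetzPair E F grade c) (hv : v ∈ grade n) (hE : E v = 0)
    {k : ℕ} (hk : 2 * k ≤ n) :
    E ((F ^ (k + 1)) v) = -(((k : K) + 1) * ((c : K) - n + k)) • (F ^ k) v := by
  induction k with
  | zero =>
    have hrel := h.lower_raise hv
    rw [hE, map_zero] at hrel
    simp only [zero_add, pow_one, pow_zero, Module.End.one_apply]
    linear_combination (norm := module) -hrel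
  | succ k ih =>
    have hrel := h.lower_raise (h.pow_lower_mem hv (k + 1))
    rw [ih (by omega), map_smul, ← Module.End.mul_apply, ← pow_succ',
      Nat.cast_sub (by omega)] at hrel
    rw [pow_succ' F (k + 1), Module.End.mul_apply]
    push_cast at hrel ⊢
    linear_combination (norm := module) -hrel

variable [CharZero K]

theorem eq_zero_of_raise_eq_zero (h : IsLefschetzPair E F grade c) (hn : n + 1 ≤ c)
    (hv : v ∈ grade n) (hE : E v = 0) : v = 0 := by
  suffices ∀ k ≤ n / 2 + 1, (F ^ k) v = 0 → v = 0 from this _ le_rfl (h.pow_lower_eq_zero hv)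
  intro k
  induction k with
  | zero => simp
  | succ k ih =>
    intro hk hzero
    refine ih (by omega) ?_
    have hstring := h.raise_pow_lower_succ hv hE (k := k) (by omega)
    rw [hzero, map_zero, eq_comm, smul_eq_zero] at hstring
    refine hstring.resolve_left ?_
    have hcoeff : ((k : K) + 1) * ((c : K) - n + k) = (((k + 1) * (c - n + k) : ℕ) : K) := by
      push_cast [Nat.cast_sub (by omega : n ≤ c)]
      ring
    rw [hcoeff, neg_eq_zero, Nat.cast_eq_zero]
    exact Nat.mul_ne_zero (by omega) (by omega)

theorem exists_nat_eq_of_lower_raise_eq_smul (h : IsLefschetzPair E F grade c) {p : ℕ}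
    (hp : c ≤ p + 2) {x : M} (hx : x ∈ grade p) (hx0 : x ≠ 0) {μ : K}
    (hμ : F (E x) = μ • x) : ∃ j : ℕ, μ = j := by
  obtain ⟨t, ht⟩ : ∃ t, 2 * c < p + 2 * (t + 1) := ⟨c, by omega⟩
  induction t generalizing p x μ with
  | zero =>
    have hEx : E x = 0 := by
      simpa [h.grade_eq_bot (by omega)] using h.raise_mem hx
    rw [hEx, map_zero, eq_comm, smul_eq_zero] at hμ
    exact ⟨0, by simpa using hμ.resolve_right hx0⟩
  | succ t ih =>
    by_cases hμ0 : μ = 0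
    · exact ⟨0, by simp [hμ0]⟩
    have hEx0 : E x ≠ 0 := by
      intro hEx
      rw [hEx, map_zero, eq_comm, smul_eq_zero] at hμ
      tauto
    have hrel := h.lower_raise (h.raise_mem hx)
    rw [hμ, map_smul] at hrel
    obtain ⟨j, hj⟩ := ih (p := p + 2) (by omega) (h.raise_mem hx) hEx0
      (hrel.trans (by rw [← add_smul])) (by omega)
    refine ⟨j + (p + 2 - c), ?_⟩
    push_cast [Nat.cast_sub hp] at hj ⊢
    linear_combination hj

theorem exists_raise_eq (h : IsLefschetzPair E F grade c) (hn : c ≤ n + 1)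
    [FiniteDimensional K (grade (n + 2))] {u : M} (hu : u ∈ grade (n + 2)) :
    ∃ v ∈ grade n, E v = u := by
  have hmaps : ∀ z ∈ grade (n + 2), (E * F) z ∈ grade (n + 2) := fun z hz =>
    h.raise_mem (h.lower_mem hz)
  have hinj : Function.Injective ((E * F).restrict hmaps) := by
    rw [← LinearMap.ker_eq_bot, eq_bot_iff]
    rintro ⟨z, hz⟩ hEF
    have hEF : E (F z) = 0 := congrArg Subtype.val hEF
    by_contra hz0
    have hrel := h.lower_raise hz
    rw [hEF, add_zero] at hrel
    obtain ⟨j, hj⟩ := h.exists_nat_eq_of_lower_raise_eq_smul (by omega) hz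
      (fun h0 => hz0 (by simp [h0])) hrel
    push_cast at hj
    have : c = n + 2 + j := by exact_mod_cast (by linear_combination hj : (c : K) = n + 2 + j)
    omega
  obtain ⟨⟨w, hw⟩, hwu⟩ := LinearMap.injective_iff_surjective.mp hinj ⟨u, hu⟩
  exact ⟨F w, h.lower_mem hw, congrArg Subtype.val hwu⟩

end IsLefschetzPair

lemma ExteriorAlgebra.ι_mem_exteriorPower_one {R M : Type*} [CommRing R] [AddCommGroup M]
    [Module R M] (v : M) : ι R v ∈ ⋀[R]^1 M := by
  rw [exteriorPower, pow_one]
  exact LinearMap.mem_range_self _ v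

lemma ExteriorAlgebra.exteriorPower_eq_bot_of_finrank_lt {K M : Type*} [Field K]
    [AddCommGroup M] [Module K M] [FiniteDimensional K M] {n : ℕ}
    (hn : Module.finrank K M < n) : ⋀[K]^n M = ⊥ := by
  rw [← Submodule.finrank_eq_zero, exteriorPower.finrank_eq, Nat.choose_eq_zero_of_lt hn]

section Contraction

variable {R α : Type*} [CommRing R]

def coordContract (i : α) : Module.End R (ExteriorAlgebra R (α → R)) :=
  CliffordAlgebra.contractLeft (LinearMap.proj i)

lemma coordContract_ι_mul (i : α) (v : α → R) (x : ExteriorAlgebra R (α → R)) :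
    coordContract i (ι R v * x) = v i • x - ι R v * coordContract i x :=
  CliffordAlgebra.contractLeft_ι_mul _ _ _

lemma coordContract_algebraMap (i : α) (r : R) :
    coordContract i (algebraMap R (ExteriorAlgebra R (α → R)) r) = 0 :=
  CliffordAlgebra.contractLeft_algebraMap (Q := (0 : QuadraticForm R (α → R))) _ r

lemma coordContract_eq_zero_of_mem_zero (i : α) {x : ExteriorAlgebra R (α → R)}
    (hx : x ∈ ⋀[R]^0 (α → R)) : coordContract i x = 0 := by
  rw [exteriorPower, pow_zero] at hx
  obtain ⟨r, rfl⟩ := Submodule.mem_one.mp hx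
  exact coordContract_algebraMap i r

lemma coordContract_mem (i : α) {n : ℕ} {x : ExteriorAlgebra R (α → R)}
    (hx : x ∈ ⋀[R]^n (α → R)) : coordContract i x ∈ ⋀[R]^(n - 1) (α → R) := by
  rw [exteriorPower] at hx
  induction hx using Submodule.pow_induction_on_left' with
  | algebraMap r => simp [coordContract_algebraMap]
  | add x y n _ _ hx hy => simpa using Submodule.add_mem _ hx hy
  | mem_mul m hm n x hx ih =>
    obtain ⟨v, rfl⟩ := hm
    rw [coordContract_ι_mul, Nat.succ_sub_one]
    refine Submodule.sub_mem _ (Submodule.smul_mem _ _ hx) ?_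
    rcases n with _ | n
    · simp [coordContract_eq_zero_of_mem_zero i hx]
    · simpa [add_comm] using SetLike.mul_mem_graded (ι_mem_exteriorPower_one (R := R) v) ih

lemma sum_ι_single_mul_coordContract [Fintype α] [DecidableEq α] {n : ℕ}
    {x : ExteriorAlgebra R (α → R)} (hx : x ∈ ⋀[R]^n (α → R)) :
    ∑ i, ι R (Pi.single i 1) * coordContract i x = (n : R) • x := by
  rw [exteriorPower] at hx
  induction hx using Submodule.pow_induction_on_left' with
  | algebraMap r => simp [coordContract_algebraMap]
  | add x y n _ _ hx hy => simp only [map_add, mul_add, Finset.sum_add_distrib, hx, hy, smul_add]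
  | mem_mul m hm n x hx ih =>
    obtain ⟨v, rfl⟩ := hm
    have hexpand : ∑ i, v i • ι R (Pi.single i (1 : R)) = ι R v := by
      simp only [← map_smul, ← map_sum, ← Pi.single_smul, smul_eq_mul, mul_one,
        Finset.univ_sum_single]
    calc ∑ i, ι R (Pi.single i 1) * coordContract i (ι R v * x)
        = (∑ i, v i • ι R (Pi.single i 1)) * x
            + ι R v * ∑ i, ι R (Pi.single i 1) * coordContract i x := by
          rw [Finset.sum_mul, Finset.mul_sum, ← Finset.sum_add_distrib]
          refine Finset.sum_congr rfl fun i _ => ?_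
          rw [coordContract_ι_mul, mul_sub, mul_smul_comm, smul_mul_assoc, ← mul_assoc,
            ← mul_assoc, eq_neg_of_add_eq_zero_left (ι_add_mul_swap (Pi.single i 1) v),
            neg_mul, sub_neg_eq_add]
      _ = ((n + 1 : ℕ) : R) • (ι R v * x) := by
          rw [hexpand, ih, mul_smul_comm]
          push_cast
          module

end Contraction

section Darboux

variable {K α : Type*} [Field K] [Fintype α]

def dualLefschetz (σ : α → α) (s : α → K) : Module.End K (ExteriorAlgebra K (α → K)) :=
  ∑ i, (-s i / 4) • (coordContract i * coordContract (σ i))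

variable {σ : α → α} {s : α → K}

lemma dualLefschetz_apply (x : ExteriorAlgebra K (α → K)) :
    dualLefschetz σ s x = ∑ i, (-s i / 4) • coordContract i (coordContract (σ i) x) := by
  simp [dualLefschetz, LinearMap.sum_apply]

lemma dualLefschetz_mem {n : ℕ} {v : ExteriorAlgebra K (α → K)} (hv : v ∈ ⋀[K]^n (α → K)) :
    dualLefschetz σ s v ∈ ⋀[K]^(n - 2) (α → K) := by
  rw [dualLefschetz_apply]
  refine Submodule.sum_mem _ fun i _ => Submodule.smul_mem _ _ ?_
  simpa [Nat.sub_sub] using coordContract_mem i (coordContract_mem (σ i) hv)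

lemma dualLefschetz_eq_zero_of_lt_two {n : ℕ} (hn : n < 2) {v : ExteriorAlgebra K (α → K)}
    (hv : v ∈ ⋀[K]^n (α → K)) : dualLefschetz σ s v = 0 := by
  rw [dualLefschetz_apply]
  refine Finset.sum_eq_zero fun i _ => ?_
  rw [coordContract_eq_zero_of_mem_zero i, smul_zero]
  simpa [show n - 1 = 0 by omega] using coordContract_mem (σ i) hv

variable [DecidableEq α]

variable (σ s) in
def darbouxForm : ExteriorAlgebra K (α → K) :=
  ∑ i, s i • (ι K (Pi.single i 1) * ι K (Pi.single (σ i) 1))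

lemma darbouxForm_mem : darbouxForm σ s ∈ ⋀[K]^2 (α → K) :=
  Submodule.sum_mem _ fun _ _ => Submodule.smul_mem _ _
    (SetLike.mul_mem_graded (ι_mem_exteriorPower_one _) (ι_mem_exteriorPower_one _))

lemma coordContract_darbouxForm_mul (hσ : Function.Involutive σ) (hs : ∀ i, s (σ i) = -s i)
    (j : α) (w : ExteriorAlgebra K (α → K)) :
    coordContract j (darbouxForm σ s * w) =
      (2 * s j) • (ι K (Pi.single (σ j) 1) * w) + darbouxForm σ s * coordContract j w := by
  have hterm : ∀ i, coordContract j (s i • (ι K (Pi.single i 1) * ι K (Pi.single (σ i) 1)) * w)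
      = (if j = i then s i • (ι K (Pi.single (σ i) 1) * w) else 0)
        - (if i = σ j then s i • (ι K (Pi.single i 1) * w) else 0)
        + s i • (ι K (Pi.single i 1) * (ι K (Pi.single (σ i) 1) * coordContract j w)) := by
    intro i
    have hji : j = σ i ↔ i = σ j := ⟨fun h => h ▸ (hσ i).symm, fun h => h ▸ (hσ j).symm⟩
    rw [smul_mul_assoc, mul_assoc, map_smul, coordContract_ι_mul, coordContract_ι_mul,
      Pi.single_apply, Pi.single_apply]
    simp only [hji, mul_sub, mul_smul_comm]
    split_ifs <;> module
  simp only [darbouxForm, Finset.sum_mul, map_sum, hterm, Finset.sum_add_distrib,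
    Finset.sum_sub_distrib, Finset.sum_ite_eq, Finset.sum_ite_eq', Finset.mem_univ, if_true, hs]
  simp only [smul_mul_assoc, mul_assoc]
  module

lemma dualLefschetz_darbouxForm_mul [NeZero (2 : K)] (hσ : Function.Involutive σ)
    (hs : ∀ i, s (σ i) = -s i) (hs2 : ∀ i, s i ^ 2 = 1) {n : ℕ}
    {v : ExteriorAlgebra K (α → K)} (hv : v ∈ ⋀[K]^n (α → K)) :
    dualLefschetz σ s (darbouxForm σ s * v) =
      ((Fintype.card α : K) / 2 - n) • v + darbouxForm σ s * dualLefschetz σ s v := by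
  have hterm : ∀ i, (-s i / 4) • coordContract i (coordContract (σ i) (darbouxForm σ s * v)) =
      (2⁻¹ : K) • v - (2⁻¹ : K) • (ι K (Pi.single i 1) * coordContract i v)
        - (2⁻¹ : K) • (ι K (Pi.single (σ i) 1) * coordContract (σ i) v)
        + (-s i / 4) • (darbouxForm σ s * coordContract i (coordContract (σ i) v)) := by
    intro i
    rw [coordContract_darbouxForm_mul hσ hs, hσ i, hs, map_add, map_smul, coordContract_ι_mul,
      Pi.single_eq_same, coordContract_darbouxForm_mul hσ hs]
    have h4 : (4 : K) ≠ 0 := by simpa [show (4 : K) = 2 * 2 by norm_num] using two_ne_zero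
    match_scalars <;> field_simp <;> norm_num [hs2]
  have hreindex : ∑ i, ι K (Pi.single (σ i) 1) * coordContract (σ i) v =
      ∑ i, ι K (Pi.single i 1) * coordContract i v :=
    Fintype.sum_bijective σ hσ.bijective _ _ fun _ => rfl
  rw [dualLefschetz_apply, dualLefschetz_apply]
  simp only [hterm, Finset.sum_add_distrib, Finset.sum_sub_distrib, ← Finset.smul_sum,
    Finset.mul_sum, mul_smul_comm, hreindex, sum_ι_single_mul_coordContract hv, Finset.sum_const,
    Finset.card_univ]
  match_scalars
  · field_simp
    ring
  · rfl

theorem isLefschetzPair_darbouxForm [NeZero (2 : K)] (hσ : Function.Involutive σ)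
    (hs : ∀ i, s (σ i) = -s i) (hs2 : ∀ i, s i ^ 2 = 1) {c : ℕ} (hc : Fintype.card α = 2 * c) :
    IsLefschetzPair (LinearMap.mulLeft K (darbouxForm σ s)) (dualLefschetz σ s)
      (fun n => ⋀[K]^n (α → K)) c where
  raise_mem hv := by simpa [add_comm] using SetLike.mul_mem_graded darbouxForm_mem hv
  lower_mem := dualLefschetz_mem
  lower_eq_zero hn hv := dualLefschetz_eq_zero_of_lt_two hn hv
  lower_raise hv := by
    rw [LinearMap.mulLeft_apply, dualLefschetz_darbouxForm_mul hσ hs hs2 hv, hc, Nat.cast_mul,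
      Nat.cast_two, mul_div_cancel_left₀ _ two_ne_zero, LinearMap.mulLeft_apply]
  grade_eq_bot hn := exteriorPower_eq_bot_of_finrank_lt (by simpa [hc] using hn)

end Darboux

section Cayley

variable {d : ℕ}

def cubeSign (x : Fin d → Fin 2) : ℤˣ := ∏ j, Equiv.Perm.sign (Equiv.addLeft (x j))

lemma cubeSign_add_one (hd : Odd d) (x : Fin d → Fin 2) : cubeSign (x + 1) = -cubeSign x := by
  have hflip : ∀ a : Fin 2,
      Equiv.Perm.sign (Equiv.addLeft (a + 1)) = -Equiv.Perm.sign (Equiv.addLeft a) := by decide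
  simp only [cubeSign, Pi.add_apply, Pi.one_apply, hflip, Finset.prod_neg, Finset.card_univ,
    Fintype.card_fin, hd.neg_one_pow, neg_one_mul]

lemma involutive_add_one : Function.Involutive (fun x : Fin d → Fin 2 => x + 1) := fun x => by
  funext j
  change x j + 1 + 1 = x j
  rw [add_assoc, show (1 + 1 : Fin 2) = 0 from rfl, add_zero]

def addLeftEquiv : Fin 2 ≃ Equiv.Perm (Fin 2) :=
  Equiv.ofBijective Equiv.addLeft (by decide)

lemma cayley_two_eq_darbouxForm :
    cayley d 2 = darbouxForm (· + 1) (fun x => ((cubeSign x : ℤ) : ℂ)) := by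
  refine (Fintype.sum_equiv (Equiv.piCongrRight fun _ => addLeftEquiv) _ _ fun x => ?_).symm
  simp [cubeSign, addLeftEquiv, ιMulti_apply, eb, ← Int.cast_smul_eq_zsmul ℂ, Matrix.vecTail,
    Pi.add_def]

theorem isLefschetzPair_cayley_two (hd : Odd d) :
    IsLefschetzPair (LinearMap.mulLeft ℂ (cayley d 2))
      (dualLefschetz (· + 1) fun x : Fin d → Fin 2 => ((cubeSign x : ℤ) : ℂ))
      (fun n => ⋀[ℂ]^n (Tens d 2)) (2 ^ (d - 1)) := by
  rw [cayley_two_eq_darbouxForm]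
  refine isLefschetzPair_darbouxForm involutive_add_one (fun x => ?_) (fun x => ?_) ?_
  · simp [cubeSign_add_one hd]
  · norm_cast
    simp [Int.units_sq]
  · rw [Fintype.card_fun, Fintype.card_fin, Fintype.card_fin, ← pow_succ',
      Nat.sub_add_cancel hd.pos]

end Cayley

theorem lefschetz_full_rank_k2_general (d : ℕ) (hd : Odd d)
    (n : ℕ) :
    (n + 1 ≤ 2 ^ (d - 1) →
      ∀ v ∈ ⋀[ℂ]^n (Tens d 2), cayley d 2 * v = 0 → v = 0) ∧
    (2 ^ (d - 1) ≤ n + 1 →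
      ∀ u ∈ ⋀[ℂ]^(n + 2) (Tens d 2),
        ∃ v ∈ ⋀[ℂ]^n (Tens d 2), cayley d 2 * v = u) := by
  have h := isLefschetzPair_cayley_two hd
  exact ⟨fun hn v hv hv0 => h.eq_zero_of_raise_eq_zero hn hv hv0,
    fun hn u hu => h.exists_raise_eq hn hu⟩

/-- For odd `d ≥ 3` the Lefschetz map `L : ⋀ⁿ V → ⋀^{n+2} V`, `v ↦ ω ∧ v`,
with `V = (ℂ²)^{⊗d}` and `ω = ω_{d,2}` the Cayley form, has full rank for every
`n ∈ [0, 2^d - 2]`: it is injective for `n ≤ 2^{d-1} - 1` and surjective for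
`n ≥ 2^{d-1} - 1`. -/
theorem lefschetz_full_rank_k2 (d : ℕ) (hd : Odd d) (hd3 : 3 ≤ d)
    (n : ℕ) (hn : n ≤ 2 ^ d - 2) :
    (n + 1 ≤ 2 ^ (d - 1) →
      ∀ v ∈ ⋀[ℂ]^n (Tens d 2), cayley d 2 * v = 0 → v = 0) ∧
    (2 ^ (d - 1) ≤ n + 1 →
      ∀ u ∈ ⋀[ℂ]^(n + 2) (Tens d 2),
        ∃ v ∈ ⋀[ℂ]^n (Tens d 2), cayley d 2 * v = u) :=
  lefschetz_full_rank_k2_general d hd n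

end
end

section
/- Let $d \ge 3$ be odd, $V_n = (\mathbb{C}^n)^{\otimes d}$, and let $\pmb{\lambda}$ be a $d$-tuple of partitions each contained in the rectangle $k^{d-1} \times k$. Suppose the map $L_k: \mathrm{HWV}_{\pmb{\lambda}'} \bigwedge V_k \to \mathrm{HWV}_{(\rho_k \pmb{\lambda})'} \bigwedge V_k$, $v \mapsto \omega_{d,k} \wedge v$, is injective. Then for every $\ell > k$, the map $L_\ell: \mathrm{HWV}_{\pmb{\lambda}'} \bigwedge V_\ell \to \mathrm{HWV}_{(\rho_\ell \pmb{\lambda})'} \bigwedge V_\ell$, $v \mapsto \omega_{d,\ell} \wedge v$, is also injective. -/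
open ExteriorAlgebra

noncomputable section

/-!
Induct on `ℓ`, passing from `V_n` to `V_{n+1}`. A vector `v` of the padded weight has weight `0`
in the new coordinate of every factor, so it is fixed by `diag(1, …, 1, 0)` on each factor: `v` is
the extension of its restriction `u` to `V_n`, and `u` is a highest weight vector of the old
weight. Contract `ω_{d,n+1} ∧ v = 0` with the dual of `e_{(n+1, …, n+1)}`: the contraction kills
`v`, and after restriction it turns `ω_{d,n+1}` into `(-1)^n (n+1) ω_{d,n}`. For this, each of the
`n + 1` terms of the contraction is matched with `ω_{d,n}` by relabelling all `d` factors with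
the same cycle, whose total sign is the sign of one cycle because `d` is odd. Hence
`ω_{d,n} ∧ u = 0`, so `u = 0` by injectivity at level `n`, and `v = 0`.
-/

namespace CliffordAlgebra

variable {R M : Type*} [CommRing R] [AddCommGroup M] [Module R M] {Q : QuadraticForm R M}

theorem contractLeft_mul (δ : Module.Dual R M) (x y : CliffordAlgebra Q) :
    contractLeft δ (x * y) = contractLeft δ x * y + involute x * contractLeft δ y := by
  induction x using CliffordAlgebra.induction generalizing y with
  | algebraMap r =>
    rw [contractLeft_algebraMap_mul, contractLeft_algebraMap, AlgHom.commutes, zero_mul, zero_add]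
  | ι m =>
    rw [contractLeft_ι_mul, contractLeft_ι, involute_ι, Algebra.algebraMap_eq_smul_one,
      smul_mul_assoc, one_mul, neg_mul, sub_eq_add_neg]
  | mul a b ha hb =>
    rw [mul_assoc, ha, hb, ha, map_mul]
    simp only [mul_assoc, mul_add, add_mul]
    abel
  | add a b ha hb =>
    simp only [add_mul, map_add, ha, hb]
    abel

end CliffordAlgebra

namespace ExteriorAlgebra

open CliffordAlgebra

variable {R M N : Type*} [CommRing R] [AddCommGroup M] [Module R M] [AddCommGroup N] [Module R N]

theorem map_mem_exteriorPower (f : M →ₗ[R] N) {n : ℕ} {x : ExteriorAlgebra R M}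
    (hx : x ∈ ⋀[R]^n M) : map f x ∈ ⋀[R]^n N := by
  have h : Submodule.map (map f).toLinearMap (⋀[R]^n M) ≤ ⋀[R]^n N := by
    rw [Submodule.map_pow, ι_range_map_map]
    exact pow_le_pow_left' LinearMap.map_le_range n
  exact h (Submodule.mem_map_of_mem hx)

theorem contractLeft_map_eq_zero (δ : Module.Dual R N) (f : M →ₗ[R] N) (hf : δ ∘ₗ f = 0)
    (x : ExteriorAlgebra R M) : contractLeft δ (map f x) = 0 := by
  induction x using CliffordAlgebra.induction with
  | algebraMap r => rw [AlgHom.commutes, contractLeft_algebraMap]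
  | ι m => rw [map_apply_ι, contractLeft_ι, ← LinearMap.comp_apply, hf, LinearMap.zero_apply,
      map_zero]
  | mul a b ha hb => rw [map_mul, contractLeft_mul, ha, hb, zero_mul, mul_zero, add_zero]
  | add a b ha hb => rw [map_add, map_add, ha, hb, add_zero]

theorem contractLeft_ιMulti_succ (δ : Module.Dual R M) {n : ℕ} (v : Fin (n + 1) → M) :
    contractLeft δ (ιMulti R (n + 1) v) =
      ∑ i : Fin (n + 1),
        ((-1 : R) ^ (i : ℕ) * δ (v i)) • ιMulti R n (v ∘ i.succAbove) := by
  induction n with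
  | zero =>
    rw [ιMulti_succ_apply, contractLeft_ι_mul]
    simp [ιMulti_zero_apply, contractLeft_one]
  | succ n ih =>
    rw [ιMulti_succ_apply, contractLeft_ι_mul, ih, Finset.mul_sum, Fin.sum_univ_succ (n := n + 1),
      sub_eq_add_neg, ← Finset.sum_neg_distrib]
    congr 1
    · simp [Matrix.vecTail, Function.comp_def]
    · refine Finset.sum_congr rfl fun i _ => ?_
      rw [mul_smul_comm, ← neg_smul, ιMulti_succ_apply]
      simp only [Matrix.vecTail, Function.comp_def, Fin.succ_succAbove_succ, Fin.val_succ,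
        pow_succ]
      congr 1
      ring

end ExteriorAlgebra

namespace Equiv.Perm

variable {k : ℕ}

def extendLast (σ : Perm (Fin k)) : Perm (Fin (k + 1)) :=
  finSuccEquivLast.symm.permCongr σ.optionCongr

@[simp]
theorem extendLast_castSucc (σ : Perm (Fin k)) (x : Fin k) :
    extendLast σ x.castSucc = (σ x).castSucc := by
  simp [extendLast, permCongr_apply]

@[simp]
theorem extendLast_last (σ : Perm (Fin k)) : extendLast σ (Fin.last k) = Fin.last k := by
  simp [extendLast, permCongr_apply]

@[simp]
theorem sign_extendLast (σ : Perm (Fin k)) : sign (extendLast σ) = sign σ := by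
  simp [extendLast]

theorem extendLast_injective : Function.Injective (extendLast (k := k)) :=
  (permCongr _).injective.comp optionCongr_injective

theorem exists_extendLast_eq {ρ : Perm (Fin (k + 1))} (h : ρ (Fin.last k) = Fin.last k) :
    ∃ σ, extendLast σ = ρ := by
  refine ⟨removeNone (finSuccEquivLast.permCongr ρ), ?_⟩
  rw [extendLast, map_equiv_removeNone]
  ext x
  simp [permCongr_apply, h, ← Perm.one_def]

end Equiv.Perm

namespace Tens

open Matrix

variable {d k : ℕ}

def castSuccIdx (x : Fin d → Fin k) : Fin d → Fin (k + 1) := fun j => (x j).castSucc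

theorem castSuccIdx_injective : Function.Injective (castSuccIdx (d := d) (k := k)) :=
  (Fin.castSucc_injective k).comp_left

theorem mem_range_castSuccIdx {y : Fin d → Fin (k + 1)} :
    y ∈ Set.range castSuccIdx ↔ ∀ j, y j ≠ Fin.last k :=
  ⟨by rintro ⟨x, rfl⟩ j; exact (x j).castSucc_lt_last.ne,
    fun h => ⟨fun j => (y j).castPred (h j), funext fun j => Fin.castSucc_castPred _ _⟩⟩

def restrict (d k : ℕ) : Tens d (k + 1) →ₗ[ℂ] Tens d k :=
  LinearMap.funLeft ℂ ℂ castSuccIdx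

def extend (d k : ℕ) : Tens d k →ₗ[ℂ] Tens d (k + 1) :=
  Function.ExtendByZero.linearMap ℂ castSuccIdx

def evalLast (d k : ℕ) : Module.Dual ℂ (Tens d (k + 1)) := LinearMap.proj fun _ => Fin.last k

theorem restrict_comp_extend : restrict d k ∘ₗ extend d k = LinearMap.id := by
  ext f x
  simp [restrict, extend, LinearMap.funLeft_apply, castSuccIdx_injective.extend_apply]

theorem restrict_eb_castSuccIdx (x : Fin d → Fin k) :
    restrict d k (eb (castSuccIdx x)) = eb x := by
  ext y
  simp [restrict, eb, LinearMap.funLeft_apply, Pi.single_apply, castSuccIdx_injective.eq_iff]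

theorem evalLast_eb (x : Fin d → Fin (k + 1)) :
    evalLast d k (eb x) = if ∀ j, x j = Fin.last k then 1 else 0 := by
  simp [evalLast, eb, Pi.single_apply, funext_iff, eq_comm]

theorem evalLast_comp_extend [NeZero d] : evalLast d k ∘ₗ extend d k = 0 := by
  ext f
  refine Function.extend_apply' _ _ _ fun hx => ?_
  exact mem_range_castSuccIdx.mp hx 0 rfl

theorem matAct_diagonal (a : Fin d → Fin k → ℂ) (f : Tens d k) (x : Fin d → Fin k) :
    matAct (fun j => diagonal (a j)) f x = (∏ j, a j (x j)) * f x := by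
  simp only [matAct, LinearMap.coe_mk, AddHom.coe_mk]
  refine (Finset.sum_eq_single x (fun y _ hyx => ?_) (by simp)).trans (by simp)
  obtain ⟨j, hj⟩ := Function.ne_iff.mp hyx
  rw [Finset.prod_eq_zero (Finset.mem_univ j) (diagonal_apply_ne (a j) (Ne.symm hj)), zero_mul]

theorem extend_comp_restrict :
    extend d k ∘ₗ restrict d k = matAct fun _ => diagonal (Fin.snoc 1 0) := by
  refine LinearMap.ext fun f => funext fun x => ?_
  rw [matAct_diagonal]
  by_cases hx : x ∈ Set.range castSuccIdx
  · obtain ⟨y, rfl⟩ := hx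
    simp [extend, restrict, castSuccIdx_injective.extend_apply, LinearMap.funLeft_apply,
      castSuccIdx]
  · obtain ⟨j, hj⟩ : ∃ j, x j = Fin.last k := by
      by_contra! h
      exact hx (mem_range_castSuccIdx.mpr h)
    rw [Finset.prod_eq_zero (Finset.mem_univ j) (by simp [hj]), zero_mul]
    exact Function.extend_apply' _ _ _ (by simpa using hx)

theorem restrict_comp_matAct {g : Fin d → Matrix (Fin k) (Fin k) ℂ}
    {G : Fin d → Matrix (Fin (k + 1)) (Fin (k + 1)) ℂ}
    (hG : ∀ j x, G j x.castSucc = Fin.snoc (g j x) 0) :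
    restrict d k ∘ₗ matAct G = matAct g ∘ₗ restrict d k := by
  refine LinearMap.ext fun f => funext fun x => ?_
  simp only [LinearMap.comp_apply, restrict, LinearMap.funLeft_apply, matAct, LinearMap.coe_mk,
    AddHom.coe_mk]
  refine (Fintype.sum_of_injective castSuccIdx castSuccIdx_injective _ _ (fun y hy => ?_)
    (fun y => ?_)).symm
  · obtain ⟨j, hj⟩ : ∃ j, y j = Fin.last k := by
      by_contra! h
      exact hy (mem_range_castSuccIdx.mpr h)
    rw [Finset.prod_eq_zero (Finset.mem_univ j) (by simp [castSuccIdx, hG, hj]), zero_mul]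
  · simp [castSuccIdx, hG]

end Tens

open Tens

section Restriction

variable {d k : ℕ}

theorem map_restrict_map_extend (u : ExteriorAlgebra ℂ (Tens d k)) :
    map (restrict d k) (map (extend d k) u) = u := by
  rw [← AlgHom.comp_apply, map_comp_map, restrict_comp_extend, map_id, AlgHom.id_apply]

theorem map_restrict_extAct {g : Fin d → Matrix (Fin k) (Fin k) ℂ}
    {G : Fin d → Matrix (Fin (k + 1)) (Fin (k + 1)) ℂ}
    (hG : ∀ j x, G j x.castSucc = Fin.snoc (g j x) 0) (v : ExteriorAlgebra ℂ (Tens d (k + 1))) :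
    map (restrict d k) (extAct G v) = extAct g (map (restrict d k) v) := by
  simp only [extAct, ← AlgHom.comp_apply, map_comp_map, restrict_comp_matAct hG]

theorem IsWeightVector.map_restrict {lam : Fin d → Fin (k + 1) → ℕ}
    {v : ExteriorAlgebra ℂ (Tens d (k + 1))} (hv : IsWeightVector lam v) :
    IsWeightVector (fun j i => lam j i.castSucc) (map (restrict d k) v) := by
  intro a
  have hG : ∀ j (x : Fin k), Matrix.diagonal (Fin.snoc (a j) 1 : Fin (k + 1) → ℂ) x.castSucc =
      Fin.snoc (Matrix.diagonal (a j) x) 0 := by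
    intro j x
    ext y
    induction y using Fin.lastCases <;> simp [Matrix.diagonal_apply, Fin.castSucc_lt_last x |>.ne]
  rw [← map_restrict_extAct hG, hv, map_smul]
  simp [Fin.prod_univ_castSucc]

-- the block matrix `diag(g, 1)`
def padMat (g : Matrix (Fin k) (Fin k) ℂ) : Matrix (Fin (k + 1)) (Fin (k + 1)) ℂ :=
  Fin.lastCases (Pi.single (Fin.last k) 1) fun x => Fin.snoc (g x) 0

theorem IsUnipotent.padMat {g : Matrix (Fin k) (Fin k) ℂ} (hg : IsUnipotent g) :
    IsUnipotent (padMat g) := by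
  refine ⟨fun i => ?_, fun i j hji => ?_⟩
  · induction i using Fin.lastCases <;> simp [_root_.padMat, hg.1]
  · induction i using Fin.lastCases with
    | last => simp [_root_.padMat, hji.ne]
    | cast x =>
      induction j using Fin.lastCases with
      | last => exact absurd hji (not_lt.mpr x.castSucc_lt_last.le)
      | cast y => simpa [_root_.padMat] using hg.2 x y (Fin.castSucc_lt_castSucc_iff.mp hji)

theorem map_restrict_mem_HWVspace {lam : Fin d → Fin (k + 1) → ℕ} {n : ℕ}
    {v : ExteriorAlgebra ℂ (Tens d (k + 1))} (hv : v ∈ HWVspace d (k + 1) lam n) :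
    map (restrict d k) v ∈ HWVspace d k (fun j i => lam j i.castSucc) n := by
  obtain ⟨hdeg, hwt, hinv⟩ := hv
  refine ⟨map_mem_exteriorPower _ hdeg, hwt.map_restrict, fun g hg => ?_⟩
  rw [← map_restrict_extAct (G := fun j => padMat (g j)) (fun j x => by simp [padMat]),
    hinv _ fun j => (hg j).padMat]

theorem map_extend_map_restrict {lam : Fin d → Fin (k + 1) → ℕ}
    (hlam : ∀ j, lam j (Fin.last k) = 0) {v : ExteriorAlgebra ℂ (Tens d (k + 1))}
    (hv : IsWeightVector lam v) : map (extend d k) (map (restrict d k) v) = v := by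
  have hfix := hv fun _ => Fin.snoc 1 0
  simp only [Fin.prod_univ_castSucc, Fin.snoc_castSucc, Fin.snoc_last, hlam, Pi.one_apply,
    one_pow, Finset.prod_const_one, pow_zero, mul_one, one_smul] at hfix
  rwa [← AlgHom.comp_apply, map_comp_map, extend_comp_restrict]

end Restriction

section CayleyContraction

open Equiv Perm CliffordAlgebra

variable {d k : ℕ}

def cayleyVec (π : Fin d → Perm (Fin k)) (i : Fin k) : Tens d k := eb fun j => π j i

theorem cayley_eq_sum (d k : ℕ) :
    cayley d k = ∑ π : Fin d → Perm (Fin k),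
      ((∏ j, sign (π j) : ℤˣ) : ℤ) • ιMulti ℂ k (cayleyVec π) := rfl

def contractTerm (i : Fin (k + 1)) (π : Fin d → Perm (Fin (k + 1))) :
    ExteriorAlgebra ℂ (Tens d (k + 1)) :=
  ((∏ j, sign (π j) : ℤˣ) : ℤ) •
    (((-1 : ℂ) ^ (i : ℕ) * evalLast d k (cayleyVec π i)) •
      ιMulti ℂ k (cayleyVec π ∘ i.succAbove))

theorem contractLeft_cayley :
    contractLeft (evalLast d k) (cayley d (k + 1)) =
      ∑ i, ∑ π : Fin d → Perm (Fin (k + 1)), contractTerm i π := by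
  simp only [cayley_eq_sum, map_sum, map_zsmul, contractLeft_ιMulti_succ, Finset.smul_sum]
  exact Finset.sum_comm

theorem contractTerm_mul_cycleIcc (hd : Odd d) (i : Fin (k + 1))
    (π : Fin d → Perm (Fin (k + 1))) :
    contractTerm i (fun j => π j * (i.cycleIcc (Fin.last k))⁻¹) =
      contractTerm (Fin.last k) π := by
  set c := i.cycleIcc (Fin.last k)
  have hc_self : c⁻¹ i = Fin.last k := by
    rw [Perm.inv_eq_iff_eq, Fin.cycleIcc_of_last i.le_last]
  have hc_succAbove : ⇑c⁻¹ ∘ i.succAbove = Fin.castSucc := by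
    funext x
    rw [Function.comp_apply, Perm.inv_eq_iff_eq, ← Fin.succAbove_last]
    exact (congrFun (Fin.cycleIcc_comp_succAbove i _ i.le_last) x).symm
  have hsign : ∏ j, sign (π j * c⁻¹) = (∏ j, sign (π j)) * (-1) ^ (k - i) := by
    rw [Finset.prod_congr rfl fun j _ => (sign_mul (π j) c⁻¹), Finset.prod_mul_distrib,
      Finset.prod_const, Finset.card_univ, Fintype.card_fin, sign_inv,
      Fin.sign_cycleIcc_of_le i.le_last, Fin.val_last, ← pow_mul, mul_comm (k - (i : ℕ)) d,
      pow_mul, hd.neg_one_pow]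
  have hvec : cayleyVec (fun j => π j * c⁻¹) = cayleyVec π ∘ ⇑c⁻¹ := rfl
  rw [contractTerm, contractTerm, hvec, Function.comp_apply, hc_self, Function.comp_assoc,
    hc_succAbove, Fin.succAbove_last, hsign, ← Int.cast_smul_eq_zsmul ℂ,
    ← Int.cast_smul_eq_zsmul ℂ, smul_smul, smul_smul]
  congr 1
  have hpow : (-1 : ℂ) ^ (k - (i : ℕ)) * (-1) ^ (i : ℕ) = (-1) ^ k := by
    rw [← pow_add, Nat.sub_add_cancel (Fin.is_le i)]
  push_cast
  rw [← hpow]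
  ring

theorem sum_contractTerm (hd : Odd d) (i : Fin (k + 1)) :
    ∑ π : Fin d → Perm (Fin (k + 1)), contractTerm i π =
      ∑ π : Fin d → Perm (Fin (k + 1)), contractTerm (Fin.last k) π := by
  let e := Equiv.piCongrRight fun _ : Fin d => Equiv.mulRight (i.cycleIcc (Fin.last k))⁻¹
  calc ∑ π, contractTerm i π = ∑ π, contractTerm i (e π) :=
        (Fintype.sum_equiv e _ _ fun _ => rfl).symm
    _ = _ := Finset.sum_congr rfl fun π _ => contractTerm_mul_cycleIcc hd i π

theorem map_restrict_contractTerm_last_extendLast (σ : Fin d → Perm (Fin k)) :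
    map (restrict d k) (contractTerm (Fin.last k) fun j => extendLast (σ j)) =
      (-1 : ℂ) ^ k • ((∏ j, sign (σ j) : ℤˣ) : ℤ) • ιMulti ℂ k (cayleyVec σ) := by
  have hlast : evalLast d k (cayleyVec (fun j => extendLast (σ j)) (Fin.last k)) = 1 := by
    simp [cayleyVec, evalLast_eb]
  have hrest :
      restrict d k ∘ cayleyVec (fun j => extendLast (σ j)) ∘ Fin.castSucc = cayleyVec σ := by
    funext x
    simp only [Function.comp_apply, cayleyVec, extendLast_castSucc]
    exact restrict_eb_castSuccIdx fun j => σ j x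
  rw [contractTerm, map_zsmul, map_smul, map_apply_ιMulti, Fin.succAbove_last, hlast, hrest,
    Fin.val_last, mul_one, smul_comm]
  simp

theorem map_restrict_sum_contractTerm_last :
    map (restrict d k) (∑ π : Fin d → Perm (Fin (k + 1)), contractTerm (Fin.last k) π) =
      (-1 : ℂ) ^ k • cayley d k := by
  rw [map_sum, cayley_eq_sum, Finset.smul_sum]
  refine (Fintype.sum_of_injective (fun σ j => extendLast (σ j)) extendLast_injective.comp_left
    _ _ (fun π hπ => ?_) fun σ => (map_restrict_contractTerm_last_extendLast σ).symm).symm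
  have hfix : ¬ ∀ j, π j (Fin.last k) = Fin.last k := fun h =>
    hπ ⟨fun j => (exists_extendLast_eq (h j)).choose,
      funext fun j => (exists_extendLast_eq (h j)).choose_spec⟩
  simp [contractTerm, cayleyVec, evalLast_eb, hfix]

theorem map_restrict_contractLeft_cayley (hd : Odd d) :
    map (restrict d k) (contractLeft (evalLast d k) (cayley d (k + 1))) =
      ((-1 : ℂ) ^ k * (k + 1)) • cayley d k := by
  rw [contractLeft_cayley, Finset.sum_congr rfl fun i _ => sum_contractTerm hd i,
    Finset.sum_const, Finset.card_univ, Fintype.card_fin, map_nsmul,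
    map_restrict_sum_contractTerm_last, ← Nat.cast_smul_eq_nsmul ℂ, smul_smul]
  push_cast
  ring_nf

end CayleyContraction

def LefschetzInjective (d k : ℕ) (mu : Fin d → Fin k → ℕ) (m : ℕ) : Prop :=
  ∀ v ∈ HWVspace d k mu m, cayley d k * v = 0 → v = 0

def padWeight {d k : ℕ} (ℓ : ℕ) (mu : Fin d → Fin k → ℕ) : Fin d → Fin ℓ → ℕ :=
  fun j i => if h : (i : ℕ) < k then mu j ⟨i, h⟩ else 0

section Padding

variable {d k : ℕ}

@[simp]
theorem padWeight_self (mu : Fin d → Fin k → ℕ) : padWeight k mu = mu := by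
  funext j i
  simp [padWeight]

theorem padWeight_padWeight {t : ℕ} (ht : k ≤ t) (mu : Fin d → Fin k → ℕ) :
    padWeight (t + 1) (padWeight t mu) = padWeight (t + 1) mu := by
  funext j i
  by_cases hi : (i : ℕ) < t
  · simp [padWeight, hi]
  · have hik : ¬(i : ℕ) < k := fun h => hi (h.trans_le ht)
    simp [padWeight, hi, hik]

@[simp]
theorem padWeight_castSucc (nu : Fin d → Fin k → ℕ) (j : Fin d) (i : Fin k) :
    padWeight (k + 1) nu j i.castSucc = nu j i := by
  simp [padWeight]

@[simp]
theorem padWeight_last (nu : Fin d → Fin k → ℕ) (j : Fin d) :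
    padWeight (k + 1) nu j (Fin.last k) = 0 := by
  simp [padWeight]

end Padding

open CliffordAlgebra in
theorem LefschetzInjective.succ {d n m : ℕ} {nu : Fin d → Fin n → ℕ} (hd : Odd d)
    (h : LefschetzInjective d n nu m) : LefschetzInjective d (n + 1) (padWeight (n + 1) nu) m := by
  have : NeZero d := ⟨hd.pos.ne'⟩
  intro v hv hωv
  set u := map (restrict d n) v
  have hv_eq : map (extend d n) u = v := map_extend_map_restrict (padWeight_last nu) hv.2.1
  have hu : u ∈ HWVspace d n nu m := by simpa using map_restrict_mem_HWVspace hv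
  have hωu : ((-1 : ℂ) ^ n * (n + 1)) • (cayley d n * u) = 0 := by
    have h0 := congrArg (fun x => map (restrict d n) (contractLeft (evalLast d n) x)) hωv
    simp only [← hv_eq, contractLeft_mul, contractLeft_map_eq_zero _ _ evalLast_comp_extend,
      mul_zero, add_zero, map_mul, map_restrict_contractLeft_cayley hd, map_restrict_map_extend,
      map_zero] at h0
    rwa [smul_mul_assoc] at h0
  have hscalar : (-1 : ℂ) ^ n * (n + 1) ≠ 0 :=
    mul_ne_zero (pow_ne_zero _ (neg_ne_zero.mpr one_ne_zero)) (Nat.cast_add_one_ne_zero n)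
  rw [← hv_eq, h u hu ((smul_eq_zero.mp hωu).resolve_left hscalar), map_zero]

theorem LefschetzInjective.padWeight {d k m ℓ : ℕ} {mu : Fin d → Fin k → ℕ} (hd : Odd d)
    (h : LefschetzInjective d k mu m) (hkℓ : k ≤ ℓ) :
    LefschetzInjective d ℓ (padWeight ℓ mu) m := by
  induction ℓ, hkℓ using Nat.le_induction with
  | base => rwa [padWeight_self]
  | succ t ht ih => rw [← padWeight_padWeight ht]; exact ih.succ hd

theorem stable_injectivity_general (d k m : ℕ) (hd : Odd d)
    (mu : Fin d → Fin k → ℕ)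
    (hinj : ∀ v ∈ HWVspace d k mu m, cayley d k * v = 0 → v = 0)
    (ℓ : ℕ) (hkl : k < ℓ) :
    ∀ v ∈ HWVspace d ℓ
        (fun j (i : Fin ℓ) => if h : (i : ℕ) < k then mu j ⟨(i : ℕ), h⟩ else 0) m,
      cayley d ℓ * v = 0 → v = 0 := by
  exact LefschetzInjective.padWeight hd hinj hkl.le

/-- **stable injectivity of the Lefschetz map.** Let `d ≥ 3` be odd and let
`𝛌` be a `d`-tuple of partitions contained in the rectangle `k^{d-1} × k` (encoded by the
tuple `mu` of conjugate partitions: weakly decreasing `k`-tuples with entries `≤ k^{d-1}`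
summing to `m`). If `L_k : v ↦ ω_{d,k} ∧ v` is injective on the highest weight space of
weight `mu` in `⋀ V_k`, then for every `ℓ > k` the map `L_ℓ : v ↦ ω_{d,ℓ} ∧ v` is injective
on the highest weight space of the padded weight in `⋀ V_ℓ`. -/
theorem stable_injectivity (d k m : ℕ) (hd : Odd d) (hd3 : 3 ≤ d)
    (mu : Fin d → Fin k → ℕ) (hanti : ∀ j, Antitone (mu j))
    (hbound : ∀ j i, mu j i ≤ k ^ (d - 1)) (hsum : ∀ j, ∑ i, mu j i = m)
    (hinj : ∀ v ∈ HWVspace d k mu m, cayley d k * v = 0 → v = 0)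
    (ℓ : ℕ) (hkl : k < ℓ) :
    ∀ v ∈ HWVspace d ℓ
        (fun j (i : Fin ℓ) => if h : (i : ℕ) < k then mu j ⟨(i : ℕ), h⟩ else 0) m,
      cayley d ℓ * v = 0 → v = 0 :=
  stable_injectivity_general d k m hd mu hinj ℓ hkl
end
end

section
/- Let $d \ge 3$ be odd, and let $b_d(n)$ denote the number of magic sets of magnitude $n$ in the cube $[2]^d$ (subsets of $[2]^d$ meeting every slice in exactly $n$ points). Then the sequence $\{b_d(n)\}_{n = 0, \ldots, 2^{d-1}}$ is symmetric ($b_d(n) = b_d(2^{d-1} - n)$) and unimodal. -/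
open ExteriorAlgebra

noncomputable section

/-- Points of the cube `[k]^d`. -/
abbrev Cube (d k : ℕ) : Type := Fin d → Fin k

/-- Lexicographic linear order on the points of the cube. -/
noncomputable instance cubeLinearOrder (d k : ℕ) : LinearOrder (Cube d k) :=
  letI : LinearOrder (Lex (∀ _ : Fin d, Fin k)) :=
    @Pi.Lex.linearOrder (Fin d) (fun _ => Fin k) inferInstance
      (inferInstanceAs (@WellFoundedLT (Fin d) instLTFin)) (fun _ => inferInstance)
  LinearOrder.lift' (toLex : (Fin d → Fin k) → Lex (∀ _ : Fin d, Fin k)) toLex.injective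

/-- The part of `T` lying in the `i`-th cslice of direction `ℓ`. -/
abbrev cslice {d k : ℕ} (T : Finset (Cube d k)) (ℓ : Fin d) (i : Fin k) : Finset (Cube d k) :=
  T.filter (fun x => x ℓ = i)

/-- `T` is a magic set of magnitude `n` in `[k]^d`: every cslice meets `T` in exactly `n` points. -/
def IsMagic {d k : ℕ} (n : ℕ) (T : Finset (Cube d k)) : Prop :=
  ∀ (ℓ : Fin d) (i : Fin k), (cslice T ℓ i).card = n

/-- `C : T → [n]` is a partial Latin hypercube of type `T`: it is bijective on every cslice. -/
def IsPLH {d k n : ℕ} (T : Finset (Cube d k)) (C : {x // x ∈ T} → Fin n) : Prop :=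
  ∀ (ℓ : Fin d) (i : Fin k),
    Function.Bijective (fun y : {y : {x // x ∈ T} // (y.1 : Cube d k) ℓ = i} => C y.1)

/-- Sign of a map `Fin n → Fin n`: the sign of the permutation if bijective, `0` otherwise. -/
noncomputable def permSign {n : ℕ} (f : Fin n → Fin n) : ℤ :=
  if h : Function.Bijective f then Equiv.Perm.sign (Equiv.ofBijective f h) else 0

/-- The sign of the `(ℓ,i)`-cslice permutation of `C`: values of `C` on the cslice read in
lexicographic order. -/
noncomputable def cslicePermSign {d k : ℕ} (n : ℕ) (T : Finset (Cube d k))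
    (C : {x // x ∈ T} → Fin n) (ℓ : Fin d) (i : Fin k) : ℤ :=
  if h : (cslice T ℓ i).card = n then
    permSign (fun p => C ⟨((cslice T ℓ i).orderIsoOfFin h p : Cube d k),
      (Finset.mem_filter.mp ((cslice T ℓ i).orderIsoOfFin h p).2).1⟩)
  else 0

/-- The sign of a partial Latin hypercube: product of the signs of all cslice permutations. -/
noncomputable def sgnPLH {d k : ℕ} (n : ℕ) (T : Finset (Cube d k))
    (C : {x // x ∈ T} → Fin n) : ℤ :=
  ∏ ℓ : Fin d, ∏ i : Fin k, cslicePermSign n T C ℓ i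

open scoped Classical in
/-- The `d`-dimensional Alon–Tarsi number `AT(T)`: the signed count of partial Latin
hypercubes of type `T` and magnitude `n`. -/
noncomputable def ATnum {d k : ℕ} (n : ℕ) (T : Finset (Cube d k)) : ℤ :=
  ∑ C : {x // x ∈ T} → Fin n, if IsPLH T C then sgnPLH n T C else 0

open scoped Classical in
/-- The direct sum of two magic sets. -/
noncomputable def dsum {d k₁ k₂ : ℕ} (T₁ : Finset (Cube d k₁)) (T₂ : Finset (Cube d k₂)) :
    Finset (Cube d (k₁ + k₂)) :=
  T₁.image (fun x j => Fin.castAdd k₂ (x j)) ∪ T₂.image (fun x j => Fin.natAdd k₁ (x j))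

open scoped Classical in
/-- The number of magic sets of magnitude `n` in `[2]^d`. -/
noncomputable def bnum (d n : ℕ) : ℕ :=
  (Finset.univ.filter (fun T : Finset (Cube d 2) => IsMagic n T)).card

/-!
Write `x + 1` for the antipode of a point `x` of `[2]^d`. Every slice contains exactly one point
of each antipodal pair, so a set `T` splits into its unpaired part `S` (the points whose antipode
is not in `T`) and a family of `q` full pairs, and `T` meets every slice in `|S ∩ slice| + q`
points. Hence `T` is magic of magnitude `n` iff `S` is magic of some magnitude `t` and `q = n - t`;
the pairs can be chosen freely among the `2^{d-1} - 2t` pairs disjoint from `S`. Thus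
`b_d(n) = ∑_S binom(2^{d-1} - 2t_S, n - t_S)`, and each summand is increasing in `n` up to
`n = 2^{d-2}`. Complementation gives the symmetry, which turns this into the decrease after
`2^{d-2}`.
-/

open Finset

variable {d k n : ℕ}

theorem card_cslice_univ (ℓ : Fin d) (i : Fin k) :
    #(cslice (univ : Finset (Cube d k)) ℓ i) = k ^ (d - 1) := by
  simpa using Fintype.card_filter_piFinset_const (univ : Finset (Fin k)) ℓ i

theorem card_cslice_union {A B : Finset (Cube d k)} (h : Disjoint A B) (ℓ : Fin d) (i : Fin k) :
    #(cslice (A ∪ B) ℓ i) = #(cslice A ℓ i) + #(cslice B ℓ i) := by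
  rw [cslice, filter_union, card_union_of_disjoint (disjoint_filter_filter h)]

theorem isMagic_compl {T : Finset (Cube d k)} (hT : IsMagic n T) :
    IsMagic (k ^ (d - 1) - n) Tᶜ := by
  intro ℓ i
  have hsub : cslice T ℓ i ⊆ cslice univ ℓ i := filter_subset_filter _ (subset_univ T)
  rw [← card_cslice_univ ℓ i, ← hT ℓ i, ← card_sdiff_of_subset hsub]
  congr 1
  ext x
  simp only [cslice, mem_filter, mem_compl, mem_sdiff, mem_univ, true_and]
  tauto

theorem bnum_eq_bnum_sub (hn : n ≤ 2 ^ (d - 1)) : bnum d n = bnum d (2 ^ (d - 1) - n) := by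
  classical
  refine card_bij' (fun T _ => Tᶜ) (fun T _ => Tᶜ) (fun T hT => ?_) (fun T hT => ?_)
    (fun T _ => compl_compl T) (fun T _ => compl_compl T)
  · simpa using isMagic_compl (mem_filter.mp hT).2
  · simpa [Nat.sub_sub_self hn] using isMagic_compl (mem_filter.mp hT).2

namespace MagicSets

theorem add_one_add_one (x : Cube d 2) : x + 1 + 1 = x := by
  funext j
  simp only [Pi.add_apply, Pi.one_apply]
  generalize x j = a
  revert a
  decide

theorem add_one_apply_eq_iff (x : Cube d 2) (ℓ : Fin d) (i : Fin 2) :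
    (x + 1) ℓ = i ↔ x ℓ = i + 1 := by
  simp only [Pi.add_apply, Pi.one_apply]
  generalize x ℓ = a
  revert a i
  decide

theorem add_one_apply_eq_zero_iff (x : Cube d 2) (ℓ : Fin d) :
    (x + 1) ℓ = 0 ↔ x ℓ ≠ 0 := by
  rw [add_one_apply_eq_iff]
  generalize x ℓ = a
  revert a
  decide

theorem mem_image_add_one {S : Finset (Cube d 2)} {x : Cube d 2} :
    x ∈ S.image (· + 1) ↔ x + 1 ∈ S := by
  refine ⟨fun h => ?_, fun h => mem_image.mpr ⟨x + 1, h, add_one_add_one x⟩⟩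
  obtain ⟨y, hy, rfl⟩ := mem_image.mp h
  rwa [add_one_add_one]

theorem cslice_image_add_one (T : Finset (Cube d 2)) (ℓ : Fin d) (i : Fin 2) :
    cslice (T.image (· + 1)) ℓ i = (cslice T ℓ (i + 1)).image (· + 1) := by
  rw [cslice, filter_image]
  exact congrArg _ (filter_congr fun x _ => add_one_apply_eq_iff x ℓ i)

theorem card_cslice_add_card_cslice_add_one (T : Finset (Cube d 2)) (ℓ : Fin d) (i : Fin 2) :
    #(cslice T ℓ i) + #(cslice T ℓ (i + 1)) = #T := by
  have hflip : ∀ a : Fin 2, a = i + 1 ↔ ¬a = i := by revert i; decide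
  simp only [cslice, hflip, card_filter_add_card_filter_not]

theorem _root_.IsMagic.card_eq {T : Finset (Cube d 2)} (hT : IsMagic n T) (ℓ : Fin d) :
    #T = 2 * n := by
  rw [← card_cslice_add_card_cslice_add_one T ℓ 0, hT, hT, two_mul]

def AntipodeFree (S : Finset (Cube d 2)) : Prop := ∀ x ∈ S, x + 1 ∉ S

def antipodalClosure (F : Finset (Cube d 2)) : Finset (Cube d 2) := F ∪ F.image (· + 1)

theorem card_cslice_antipodalClosure {F : Finset (Cube d 2)} (hF : AntipodeFree F) (ℓ : Fin d)
    (i : Fin 2) : #(cslice (antipodalClosure F) ℓ i) = #F := by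
  have hdisj : Disjoint F (F.image (· + 1)) :=
    disjoint_right.mpr fun x hx hxF => hF x hxF (mem_image_add_one.mp hx)
  rw [antipodalClosure, card_cslice_union hdisj, cslice_image_add_one,
    card_image_of_injective _ (add_left_injective 1), card_cslice_add_card_cslice_add_one]

def unpaired (T : Finset (Cube d 2)) : Finset (Cube d 2) := T.filter (· + 1 ∉ T)

def pairReps (ℓ₀ : Fin d) (T : Finset (Cube d 2)) : Finset (Cube d 2) :=
  T.filter (fun x => x + 1 ∈ T ∧ x ℓ₀ = 0)

def freeReps (ℓ₀ : Fin d) (S : Finset (Cube d 2)) : Finset (Cube d 2) :=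
  univ.filter (fun p => p ℓ₀ = 0 ∧ p ∉ S ∧ p + 1 ∉ S)

def glue (S F : Finset (Cube d 2)) : Finset (Cube d 2) := S ∪ antipodalClosure F

theorem antipodeFree_unpaired (T : Finset (Cube d 2)) : AntipodeFree (unpaired T) := by
  intro x hx hx1
  exact (mem_filter.mp hx).2 (mem_filter.mp hx1).1

theorem mem_freeReps {ℓ₀ : Fin d} {S : Finset (Cube d 2)} {p : Cube d 2} :
    p ∈ freeReps ℓ₀ S ↔ p ℓ₀ = 0 ∧ p ∉ S ∧ p + 1 ∉ S := by
  simp [freeReps]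

theorem glue_unpaired_pairReps (ℓ₀ : Fin d) (T : Finset (Cube d 2)) :
    glue (unpaired T) (pairReps ℓ₀ T) = T := by
  ext x
  simp only [glue, antipodalClosure, unpaired, pairReps, mem_union, mem_filter,
    mem_image_add_one, add_one_add_one, add_one_apply_eq_zero_iff]
  tauto

theorem pairReps_subset_freeReps (ℓ₀ : Fin d) (T : Finset (Cube d 2)) :
    pairReps ℓ₀ T ⊆ freeReps ℓ₀ (unpaired T) := by
  intro x hx
  simp only [pairReps, mem_filter] at hx
  simp only [mem_freeReps, unpaired, mem_filter, add_one_add_one]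
  tauto

section Glue

variable {ℓ₀ : Fin d} {S F : Finset (Cube d 2)}

theorem antipodeFree_of_subset_freeReps (hF : F ⊆ freeReps ℓ₀ S) : AntipodeFree F := by
  intro x hx hx1
  have h0 := (mem_freeReps.mp (hF hx)).1
  have h1 := (mem_freeReps.mp (hF hx1)).1
  exact (add_one_apply_eq_zero_iff x ℓ₀).mp h1 h0

theorem card_cslice_glue (hF : F ⊆ freeReps ℓ₀ S) (ℓ : Fin d) (i : Fin 2) :
    #(cslice (glue S F) ℓ i) = #(cslice S ℓ i) + #F := by
  have hdisj : Disjoint S (antipodalClosure F) := by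
    refine disjoint_right.mpr fun x hx hxS => ?_
    rcases mem_union.mp hx with hxF | hxF
    · exact (mem_freeReps.mp (hF hxF)).2.1 hxS
    · have := (mem_freeReps.mp (hF (mem_image_add_one.mp hxF))).2.2
      rw [add_one_add_one] at this
      exact this hxS
  rw [glue, card_cslice_union hdisj,
    card_cslice_antipodalClosure (antipodeFree_of_subset_freeReps hF)]

theorem unpaired_glue (hS : AntipodeFree S) (hF : F ⊆ freeReps ℓ₀ S) :
    unpaired (glue S F) = S := by
  ext x
  have hSx := hS x
  have hFx : x ∈ F → x ∉ S := fun h => (mem_freeReps.mp (hF h)).2.1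
  have hFx1 : x + 1 ∈ F → x ∉ S := fun h => by
    simpa only [add_one_add_one] using (mem_freeReps.mp (hF h)).2.2
  simp only [unpaired, glue, antipodalClosure, mem_filter, mem_union, mem_image_add_one,
    add_one_add_one]
  tauto

theorem pairReps_glue (hS : AntipodeFree S) (hF : F ⊆ freeReps ℓ₀ S) :
    pairReps ℓ₀ (glue S F) = F := by
  ext x
  have hSx := hS x
  have hFx : x ∈ F → x ℓ₀ = 0 := fun h => (mem_freeReps.mp (hF h)).1
  have hFx1 : x + 1 ∈ F → x ℓ₀ ≠ 0 := fun h =>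
    (add_one_apply_eq_zero_iff x ℓ₀).mp (mem_freeReps.mp (hF h)).1
  simp only [pairReps, glue, antipodalClosure, mem_filter, mem_union, mem_image_add_one,
    add_one_add_one]
  tauto

theorem isMagic_glue_iff {t : ℕ} (hF : F ⊆ freeReps ℓ₀ S) (hS : IsMagic t S) :
    IsMagic n (glue S F) ↔ t + #F = n := by
  have hS' : ∀ ℓ i, #(cslice S ℓ i) = t := hS
  simp only [IsMagic, card_cslice_glue hF, hS']
  exact ⟨fun h => h ℓ₀ 0, fun h _ _ => h⟩

end Glue

theorem card_freeReps_add_card {S : Finset (Cube d 2)} (hS : AntipodeFree S) (ℓ₀ : Fin d) :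
    #(freeReps ℓ₀ S) + #S = 2 ^ (d - 1) := by
  have hsub : cslice (antipodalClosure S) ℓ₀ 0 ⊆ cslice univ ℓ₀ 0 :=
    filter_subset_filter _ (subset_univ _)
  have hfree : freeReps ℓ₀ S = cslice univ ℓ₀ 0 \ cslice (antipodalClosure S) ℓ₀ 0 := by
    ext p
    simp only [mem_freeReps, antipodalClosure, cslice, mem_sdiff, mem_filter, mem_union,
      mem_univ, mem_image_add_one, true_and]
    tauto
  rw [hfree, ← card_cslice_antipodalClosure hS ℓ₀ 0, card_sdiff_add_card_eq_card hsub,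
    card_cslice_univ]

theorem isMagic_unpaired (ℓ₀ : Fin d) {T : Finset (Cube d 2)} (hT : IsMagic n T) :
    IsMagic (n - #(pairReps ℓ₀ T)) (unpaired T) := by
  intro ℓ i
  have := card_cslice_glue (pairReps_subset_freeReps ℓ₀ T) ℓ i
  rw [glue_unpaired_pairReps, hT] at this
  omega

open scoped Classical in
def magicFiber (n : ℕ) (S : Finset (Cube d 2)) : Finset (Finset (Cube d 2)) :=
  univ.filter (fun T => IsMagic n T ∧ unpaired T = S)

theorem mem_magicFiber {S T : Finset (Cube d 2)} :
    T ∈ magicFiber n S ↔ IsMagic n T ∧ unpaired T = S := by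
  simp [magicFiber]

theorem card_magicFiber (ℓ₀ : Fin d) {t : ℕ} {S : Finset (Cube d 2)} (hSf : AntipodeFree S)
    (hS : IsMagic t S) (htn : t ≤ n) :
    #(magicFiber n S) = (2 ^ (d - 1) - 2 * t).choose (n - t) := by
  have hfree : #(freeReps ℓ₀ S) = 2 ^ (d - 1) - 2 * t := by
    have := card_freeReps_add_card hSf ℓ₀
    rw [hS.card_eq ℓ₀] at this
    omega
  rw [← hfree, ← card_powersetCard]
  refine card_bij' (fun T _ => pairReps ℓ₀ T) (fun F _ => glue S F) (fun T hT => ?_)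
    (fun F hF => ?_) (fun T hT => ?_) (fun F hF => pairReps_glue hSf (mem_powersetCard.mp hF).1)
  · obtain ⟨hTn, rfl⟩ := mem_magicFiber.mp hT
    have hsub := pairReps_subset_freeReps ℓ₀ T
    have := (isMagic_glue_iff hsub hS).mp (by rwa [glue_unpaired_pairReps])
    exact mem_powersetCard.mpr ⟨hsub, by omega⟩
  · obtain ⟨hsub, hcard⟩ := mem_powersetCard.mp hF
    exact mem_magicFiber.mpr ⟨(isMagic_glue_iff hsub hS).mpr (by omega), unpaired_glue hSf hsub⟩
  · obtain ⟨-, rfl⟩ := mem_magicFiber.mp hT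
    exact glue_unpaired_pairReps ℓ₀ T

theorem card_magicFiber_le_succ (ℓ₀ : Fin d) (hn : 2 * (n + 1) ≤ 2 ^ (d - 1))
    (S : Finset (Cube d 2)) : #(magicFiber n S) ≤ #(magicFiber (n + 1) S) := by
  rcases (magicFiber n S).eq_empty_or_nonempty with h | ⟨T, hT⟩
  · simp [h]
  obtain ⟨hTn, rfl⟩ := mem_magicFiber.mp hT
  have hS := isMagic_unpaired ℓ₀ hTn
  set t := n - #(pairReps ℓ₀ T)
  rw [card_magicFiber ℓ₀ (antipodeFree_unpaired T) hS (Nat.sub_le _ _),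
    card_magicFiber ℓ₀ (antipodeFree_unpaired T) hS (by omega),
    show n + 1 - t = n - t + 1 by omega]
  exact Nat.choose_le_succ_of_lt_half_left (by omega)

end MagicSets

open MagicSets

theorem bnum_eq_sum_card_magicFiber :
    bnum d n = ∑ S : Finset (Cube d 2), #(magicFiber n S) := by
  classical
  rw [bnum, card_eq_sum_card_fiberwise (f := unpaired) (t := univ) fun _ _ => mem_univ _]
  refine sum_congr rfl fun S _ => congrArg card ?_
  ext T
  simp [mem_magicFiber]

theorem bnum_monotoneOn (hd : 0 < d) : MonotoneOn (bnum d) (Set.Iic (2 ^ (d - 1) / 2)) := by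
  refine monotoneOn_of_le_add_one Set.ordConnected_Iic fun n _ _ hn => ?_
  rw [bnum_eq_sum_card_magicFiber, bnum_eq_sum_card_magicFiber]
  exact sum_le_sum fun S _ => card_magicFiber_le_succ ⟨0, hd⟩ (by simp at hn; omega) S

theorem bnum_antitoneOn (hd : 2 ≤ d) :
    AntitoneOn (bnum d) (Set.Icc (2 ^ (d - 1) / 2) (2 ^ (d - 1))) := by
  have heven : 2 ∣ 2 ^ (d - 1) := dvd_pow_self 2 (by omega)
  rintro a ⟨ha₁, ha₂⟩ b ⟨hb₁, hb₂⟩ hab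
  rw [bnum_eq_bnum_sub hb₂, bnum_eq_bnum_sub ha₂]
  exact bnum_monotoneOn (by omega) (Set.mem_Iic.mpr (by omega)) (Set.mem_Iic.mpr (by omega))
    (by omega)

theorem magic_sets_symmetric_unimodal_general (d : ℕ) (hd3 : 3 ≤ d) :
    (∀ n ≤ 2 ^ (d - 1), bnum d n = bnum d (2 ^ (d - 1) - n)) ∧
    (∃ n₀ ≤ 2 ^ (d - 1),
      (∀ a b : ℕ, a ≤ b → b ≤ n₀ → bnum d a ≤ bnum d b) ∧
      (∀ a b : ℕ, n₀ ≤ a → a ≤ b → b ≤ 2 ^ (d - 1) → bnum d b ≤ bnum d a)) := by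
  refine ⟨fun n hn => bnum_eq_bnum_sub hn, 2 ^ (d - 1) / 2, Nat.div_le_self _ _,
    fun a b hab hb => bnum_monotoneOn (by omega) (hab.trans hb) hb hab,
    fun a b ha hab hb =>
      bnum_antitoneOn (by omega) ⟨ha, hab.trans hb⟩ ⟨ha.trans hab, hb⟩ hab⟩

/-- For odd `d ≥ 3`, the sequence counting magic sets of magnitude `n` in
`[2]^d` is symmetric and unimodal on `n = 0, …, 2^{d-1}`. -/
theorem magic_sets_symmetric_unimodal (d : ℕ) (hd : Odd d) (hd3 : 3 ≤ d) :
    (∀ n ≤ 2 ^ (d - 1), bnum d n = bnum d (2 ^ (d - 1) - n)) ∧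
    (∃ n₀ ≤ 2 ^ (d - 1),
      (∀ a b : ℕ, a ≤ b → b ≤ n₀ → bnum d a ≤ bnum d b) ∧
      (∀ a b : ℕ, n₀ ≤ a → a ≤ b → b ≤ 2 ^ (d - 1) → bnum d b ≤ bnum d a)) :=
  magic_sets_symmetric_unimodal_general d hd3

end
end
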